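/- (Johnson-type bound for symbol-pair codes) Let C ⊆ F_q^n be a code with minimum pair distance d, let δ = d/n, and assume q²δ ≤ q² − 1. Then C is (τn, 2(q²−1)·n·d)_P-list decodable, where τ = ((q²−1)/q²)·(1 − √(1 − q²δ/(q²−1))). -/

import Mathlib

open scoped Classical

/-- The symbol-pair distance between two vectors `x, y : Fin n → F`. -/
def pairDist {F : Type*} [DecidableEq F] {n : ℕ} (x y : Fin n → F) : ℕ :=
  (Finset.univ.filter fun i : Fin n =>
    (x i, x ⟨(i.1 + 1) % n, Nat.mod_lt _ i.pos⟩) ≠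
    (y i, y ⟨(i.1 + 1) % n, Nat.mod_lt _ i.pos⟩)).card

/-- The minimum pair distance of a code `C`. -/
noncomputable def minPairDist {F : Type*} [DecidableEq F] {n : ℕ}
    (C : Finset (Fin n → F)) : ℕ :=
  sInf {d : ℕ | ∃ x ∈ C, ∃ y ∈ C, x ≠ y ∧ pairDist x y = d}

/-- A code `C ⊆ F_q^n` is `(r, L)_P`-list decodable if every symbol-pair ball of
radius `r` contains at most `L` codewords of `C`. -/
noncomputable def pairListDecodable {F : Type*} [Fintype F] [DecidableEq F] {n : ℕ}
    (C : Finset (Fin n → F)) (r : ℝ) (L : ℕ) : Prop :=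
  ∀ y : Fin n → F, (C.filter fun c => (pairDist y c : ℝ) ≤ r).card ≤ L

/-!
Encode a word `u ∈ Σⁿ` by its one-hot vector in `ℝ^(n × Σ)`, so that
`⟪oneHot u, oneHot v⟫ = n - d_H(u, v)`, and move the origin to
`c = s • oneHot y + (1 - s)/Q • 𝟙` with `s = √(1 - Qδ/(Q - 1))`, `Q = |Σ|`. For distinct codewords
`u, v` in the Hamming ball of radius `r = (Q - 1)/Q · (1 - s) · n` around `y`,
`⟪oneHot u - c, oneHot v - c⟫ ≤ (Q - 1)/Q · (1 - s)² · n - d + 2sr = 0`. These shifted vectors are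
nonzero and have zero row sums, a space of dimension `n(Q - 1)`, and nonzero vectors with pairwise
non-positive inner products number at most twice the dimension. The symbol-pair read
`x ↦ ((x_i, x_{i+1}))_i` turns pair distance into Hamming distance over `F × F`, so `Q = q²`.
-/

open scoped RealInnerProductSpace

open Module

section Obtuse

variable {E : Type*} [NormedAddCommGroup E] [InnerProductSpace ℝ E]

noncomputable def rejection (v x : E) : E := x - (⟪v, x⟫ / ‖v‖ ^ 2) • v

lemma inner_rejection_right_self (v x : E) : ⟪v, rejection v x⟫ = 0 := by
  rcases eq_or_ne v 0 with rfl | hv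
  · simp
  have : ‖v‖ ≠ 0 := norm_ne_zero_iff.2 hv
  simp only [rejection, inner_sub_right, real_inner_smul_right, real_inner_self_eq_norm_sq]
  field_simp
  ring

lemma inner_rejection_rejection (v a b : E) :
    ⟪rejection v a, rejection v b⟫ = ⟪a, b⟫ - ⟪v, a⟫ * ⟪v, b⟫ / ‖v‖ ^ 2 := by
  conv_lhs => rw [rejection, inner_sub_left, real_inner_smul_left, inner_rejection_right_self,
    mul_zero, sub_zero, rejection, inner_sub_right, real_inner_smul_right, real_inner_comm v a]
  ring

lemma inner_rejection_nonpos {v a b : E} (hab : ⟪a, b⟫ ≤ 0) (ha : ⟪v, a⟫ ≤ 0)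
    (hb : ⟪v, b⟫ ≤ 0) : ⟪rejection v a, rejection v b⟫ ≤ 0 := by
  rw [inner_rejection_rejection]
  have : 0 ≤ ⟪v, a⟫ * ⟪v, b⟫ / ‖v‖ ^ 2 :=
    div_nonneg (mul_nonneg_of_nonpos_of_nonpos ha hb) (sq_nonneg _)
  linarith

lemma inner_pos_of_rejection_eq_zero {v a b : E} (ha₀ : a ≠ 0) (hb₀ : b ≠ 0)
    (ha : ⟪v, a⟫ ≤ 0) (hb : ⟪v, b⟫ ≤ 0) (hra : rejection v a = 0) (hrb : rejection v b = 0) :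
    0 < ⟪a, b⟫ := by
  have hne : ∀ x : E, x ≠ 0 → rejection v x = 0 → ⟪v, x⟫ ≠ 0 := fun x hx hrx hvx => by
    simp [rejection, hvx, hx] at hrx
  have hv : v ≠ 0 := fun hv => hne a ha₀ hra (by simp [hv])
  have hab := inner_rejection_rejection v a b
  rw [hra, inner_zero_left] at hab
  have hprod : 0 < ⟪v, a⟫ * ⟪v, b⟫ :=
    mul_pos_of_neg_of_neg (lt_of_le_of_ne ha (hne a ha₀ hra)) (lt_of_le_of_ne hb (hne b hb₀ hrb))
  have : 0 < ⟪v, a⟫ * ⟪v, b⟫ / ‖v‖ ^ 2 := by positivity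
  linarith

lemma rejection_mem_inf_orthogonal {K : Submodule ℝ E} {v x : E} (hv : v ∈ K) (hx : x ∈ K) :
    rejection v x ∈ K ⊓ (ℝ ∙ v)ᗮ :=
  ⟨K.sub_mem hx (K.smul_mem _ hv),
    Submodule.mem_orthogonal_singleton_iff_inner_right.2 (inner_rejection_right_self v x)⟩

lemma finrank_inf_orthogonal_singleton_lt [FiniteDimensional ℝ E] {K : Submodule ℝ E} {v : E}
    (hv : v ∈ K) (hv₀ : v ≠ 0) : finrank ℝ ↥(K ⊓ (ℝ ∙ v)ᗮ) < finrank ℝ K := by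
  refine Submodule.finrank_lt_finrank_of_lt (lt_of_le_of_ne inf_le_left fun h => hv₀ ?_)
  have : v ∈ K ⊓ (ℝ ∙ v)ᗮ := by rwa [h]
  exact inner_self_eq_zero.1 (Submodule.mem_orthogonal_singleton_iff_inner_right.1 this.2)

theorem card_le_two_mul_finrank_of_inner_nonpos [FiniteDimensional ℝ E] {ι : Type*}
    (K : Submodule ℝ E) (s : Finset ι) (f : ι → E) (hK : ∀ i ∈ s, f i ∈ K)
    (h₀ : ∀ i ∈ s, f i ≠ 0) (hf : ∀ i ∈ s, ∀ j ∈ s, i ≠ j → ⟪f i, f j⟫ ≤ 0) :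
    s.card ≤ 2 * finrank ℝ K := by
  -- Projecting orthogonally to `v = f i₀` keeps the angles obtuse and lowers the dimension; at most
  -- one vector, a negative multiple of `v`, is lost.
  induction s using Finset.strongInduction generalizing K f with
  | H s ih =>
  rcases s.eq_empty_or_nonempty with rfl | ⟨i₀, hi₀⟩
  · simp
  set v := f i₀
  set t := s.erase i₀
  have hvt : ∀ i ∈ t, ⟪v, f i⟫ ≤ 0 := fun i hi =>
    hf i₀ hi₀ i (Finset.mem_of_mem_erase hi) (Finset.ne_of_mem_erase hi).symm
  have ht₀ : (t.filter fun i => rejection v (f i) = 0).card ≤ 1 := by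
    refine Finset.card_le_one.2 fun a ha b hb => by_contra fun hab => ?_
    simp only [Finset.mem_filter] at ha hb
    have ha' := Finset.mem_of_mem_erase ha.1
    have hb' := Finset.mem_of_mem_erase hb.1
    exact (hf a ha' b hb' hab).not_gt <| inner_pos_of_rejection_eq_zero (h₀ a ha') (h₀ b hb')
      (hvt a ha.1) (hvt b hb.1) ha.2 hb.2
  have ht₁ : (t.filter fun i => rejection v (f i) ≠ 0).card ≤ 2 * finrank ℝ ↥(K ⊓ (ℝ ∙ v)ᗮ) := by
    refine ih _ ((Finset.filter_subset _ _).trans_ssubset (Finset.erase_ssubset hi₀)) _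
      (fun i => rejection v (f i)) (fun i hi => ?_) (fun i hi => (Finset.mem_filter.1 hi).2)
      (fun i hi j hj hij => ?_)
    · exact rejection_mem_inf_orthogonal (hK i₀ hi₀) (hK i (Finset.mem_of_mem_erase
        (Finset.mem_of_mem_filter i hi)))
    · simp only [Finset.mem_filter] at hi hj
      exact inner_rejection_nonpos (hf i (Finset.mem_of_mem_erase hi.1) j
        (Finset.mem_of_mem_erase hj.1) hij) (hvt i hi.1) (hvt j hj.1)
  have hlt := finrank_inf_orthogonal_singleton_lt (v := v) (hK i₀ hi₀) (h₀ i₀ hi₀)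
  have hcard : (t.filter fun i => rejection v (f i) = 0).card
      + (t.filter fun i => rejection v (f i) ≠ 0).card + 1 = s.card := by
    rw [Finset.card_filter_add_card_filter_not, Finset.card_erase_add_one hi₀]
  omega

end Obtuse

section OneHot

variable {ι σ : Type*} [Fintype σ]

noncomputable def onesVec : EuclideanSpace ℝ (ι × σ) := WithLp.toLp 2 1

def rowSum : EuclideanSpace ℝ (ι × σ) →ₗ[ℝ] ι → ℝ where
  toFun g i := ∑ a, g (i, a)
  map_add' g h := by ext i; simp [Finset.sum_add_distrib]
  map_smul' c g := by ext i; simp [Finset.mul_sum]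

lemma rowSum_onesVec :
    rowSum (onesVec : EuclideanSpace ℝ (ι × σ)) = fun _ => (Fintype.card σ : ℝ) := by
  ext i
  simp [rowSum, onesVec]

lemma rowSum_surjective [Nonempty σ] : Function.Surjective (rowSum (ι := ι) (σ := σ)) := by
  intro h
  obtain ⟨a₀⟩ := ‹Nonempty σ›
  refine ⟨WithLp.toLp 2 fun p => if p.2 = a₀ then h p.1 else 0, ?_⟩
  ext i
  simp [rowSum]

lemma finrank_ker_rowSum [Fintype ι] [Nonempty σ] :
    finrank ℝ (LinearMap.ker (rowSum (ι := ι) (σ := σ))) =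
      Fintype.card ι * (Fintype.card σ - 1) := by
  have := LinearMap.finrank_range_add_finrank_ker (rowSum (ι := ι) (σ := σ))
  rw [LinearMap.range_eq_top.2 rowSum_surjective, finrank_top, finrank_euclideanSpace,
    Fintype.card_prod, Module.finrank_fintype_fun_eq_card] at this
  rw [Nat.mul_sub_one]
  omega

lemma inner_onesVec_onesVec [Fintype ι] :
    ⟪(onesVec : EuclideanSpace ℝ (ι × σ)), onesVec⟫ = Fintype.card ι * Fintype.card σ := by
  rw [PiLp.inner_apply]
  simp [onesVec]

variable [DecidableEq σ]

noncomputable def oneHot (u : ι → σ) : EuclideanSpace ℝ (ι × σ) :=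
  WithLp.toLp 2 fun p => if u p.1 = p.2 then 1 else 0

noncomputable def johnsonCenter (y : ι → σ) (s : ℝ) : EuclideanSpace ℝ (ι × σ) :=
  s • oneHot y + ((1 - s) / Fintype.card σ) • onesVec

lemma rowSum_oneHot (u : ι → σ) : rowSum (oneHot u) = 1 := by
  ext i
  simp [rowSum, oneHot]

lemma oneHot_sub_johnsonCenter_mem_ker [Nonempty σ] (y u : ι → σ) (s : ℝ) :
    oneHot u - johnsonCenter y s ∈ LinearMap.ker rowSum := by
  ext i
  simp only [johnsonCenter, map_sub, map_add, map_smul, rowSum_oneHot, rowSum_onesVec]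
  simp

variable [Fintype ι]

lemma inner_oneHot_oneHot (u v : ι → σ) :
    ⟪oneHot u, oneHot v⟫ = Fintype.card ι - hammingDist u v := by
  have hrow : ∀ i, ∑ a : σ, (if v i = a then (1 : ℝ) else 0) * (if u i = a then 1 else 0)
      = if u i = v i then 1 else 0 := fun i => by
    rw [Finset.sum_eq_single (u i) (fun b _ hb => by simp [Ne.symm hb]) (by simp)]
    simp [eq_comm]
  rw [PiLp.inner_apply]
  simp only [oneHot, PiLp.toLp_apply, RCLike.inner_apply, conj_trivial]
  rw [Fintype.sum_prod_type]
  simp only [hrow, Finset.sum_boole]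
  rw [hammingDist, eq_sub_iff_add_eq]
  exact_mod_cast Finset.card_filter_add_card_filter_not (s := Finset.univ) (fun i => u i = v i)

lemma inner_oneHot_onesVec (u : ι → σ) :
    ⟪oneHot u, (onesVec : EuclideanSpace ℝ (ι × σ))⟫ = Fintype.card ι := by
  rw [PiLp.inner_apply, Fintype.sum_prod_type]
  simp [oneHot, onesVec]

lemma inner_oneHot_sub_johnsonCenter [Nonempty σ] (y u v : ι → σ) (s : ℝ) :
    ⟪oneHot u - johnsonCenter y s, oneHot v - johnsonCenter y s⟫
      = (Fintype.card σ - 1) / Fintype.card σ * (1 - s) ^ 2 * Fintype.card ι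
        - hammingDist u v + s * (hammingDist y u + hammingDist y v) := by
  have hQ : (Fintype.card σ : ℝ) ≠ 0 := by positivity
  simp only [johnsonCenter, inner_sub_left, inner_sub_right, inner_add_left, inner_add_right,
    real_inner_smul_left, real_inner_smul_right, real_inner_comm _ onesVec, inner_oneHot_oneHot,
    inner_oneHot_onesVec, inner_onesVec_onesVec, hammingDist_self, hammingDist_comm u y]
  field_simp
  ring

end OneHot

noncomputable def johnsonRadius (Q n d : ℝ) : ℝ :=
  (Q - 1) / Q * (1 - √(1 - Q * (d / n) / (Q - 1))) * n

lemma one_lt_of_mul_le_sub_one {Q δ : ℝ} (hQ : 0 ≤ Q) (hδ : 0 < δ) (h : Q * δ ≤ Q - 1) :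
    1 < Q := by
  have : 1 ≤ Q := by nlinarith [mul_nonneg hQ hδ.le]
  nlinarith

lemma sub_one_div_mul_sq_add_two_mul_johnsonRadius {Q n d : ℝ} (hQ : 1 < Q) (hn : 0 < n)
    (hδ : Q * (d / n) ≤ Q - 1) :
    (Q - 1) / Q * (1 - √(1 - Q * (d / n) / (Q - 1))) ^ 2 * n
      + 2 * √(1 - Q * (d / n) / (Q - 1)) * johnsonRadius Q n d = d := by
  have hQ₀ : Q ≠ 0 := by positivity
  have hQ₁ : Q - 1 ≠ 0 := by linarith
  have hs_sq : √(1 - Q * (d / n) / (Q - 1)) ^ 2 = 1 - Q * (d / n) / (Q - 1) :=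
    Real.sq_sqrt (by rw [sub_nonneg, div_le_one (by linarith)]; exact hδ)
  rw [johnsonRadius]
  linear_combination (norm := skip) (-(Q - 1) / Q * n) * hs_sq
  field_simp
  ring

theorem card_le_of_hammingDist_le_johnsonRadius {ι σ : Type*} [Fintype ι] [Nonempty ι]
    [Fintype σ] [DecidableEq σ] {d : ℕ} (hd : 0 < d)
    (hδ : (Fintype.card σ : ℝ) * (d / Fintype.card ι) ≤ Fintype.card σ - 1)
    (y : ι → σ) (T : Finset (ι → σ)) (hT : ∀ u ∈ T, ∀ v ∈ T, u ≠ v → d ≤ hammingDist u v)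
    (hTy : ∀ u ∈ T, (hammingDist y u : ℝ) ≤ johnsonRadius (Fintype.card σ) (Fintype.card ι) d) :
    T.card ≤ 2 * (Fintype.card ι * (Fintype.card σ - 1)) := by
  set Q : ℝ := (Fintype.card σ : ℝ)
  set n : ℝ := (Fintype.card ι : ℝ)
  have hn : 0 < n := Nat.cast_pos.2 Fintype.card_pos
  have hQ := one_lt_of_mul_le_sub_one (by positivity) (by positivity : (0 : ℝ) < d / n) hδ
  have : Nonempty σ := Fintype.card_pos_iff.1 (Nat.cast_pos.1 (by linarith : (0 : ℝ) < Q))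
  have hkey := sub_one_div_mul_sq_add_two_mul_johnsonRadius hQ hn hδ
  set s := √(1 - Q * (d / n) / (Q - 1))
  have hs₀ : 0 ≤ s := Real.sqrt_nonneg _
  have hs₁ : s < 1 := (Real.sqrt_lt' one_pos).2 <| by
    have : 0 < Q * (d / n) / (Q - 1) := div_pos (by positivity) (by linarith)
    linarith
  refine (card_le_two_mul_finrank_of_inner_nonpos (LinearMap.ker rowSum) T
    (fun u => oneHot u - johnsonCenter y s) (fun u _ => oneHot_sub_johnsonCenter_mem_ker y u s)
    (fun u _ hu => ?_) (fun u hu v hv huv => ?_)).trans_eq (by rw [finrank_ker_rowSum])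
  · have h := inner_oneHot_sub_johnsonCenter y u u s
    rw [hu, inner_zero_left, hammingDist_self] at h
    have : 0 < (Q - 1) / Q * (1 - s) ^ 2 * n :=
      mul_pos (mul_pos (div_pos (by linarith) (by linarith)) (pow_pos (by linarith) 2)) hn
    nlinarith
  · rw [inner_oneHot_sub_johnsonCenter]
    have hyu := mul_le_mul_of_nonneg_left (hTy u hu) hs₀
    have hyv := mul_le_mul_of_nonneg_left (hTy v hv) hs₀
    have huv' : (d : ℝ) ≤ hammingDist u v := by exact_mod_cast hT u hu v hv huv
    linarith

def pairRead {F : Type*} {n : ℕ} (x : Fin n → F) : Fin n → F × F :=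
  fun i => (x i, x ⟨(i.1 + 1) % n, Nat.mod_lt _ i.pos⟩)

lemma pairRead_injective {F : Type*} {n : ℕ} :
    Function.Injective (pairRead : (Fin n → F) → Fin n → F × F) :=
  fun _ _ h => funext fun i => congrArg Prod.fst (congrFun h i)

lemma hammingDist_pairRead {F : Type*} [DecidableEq F] {n : ℕ} (x y : Fin n → F) :
    hammingDist (pairRead x) (pairRead y) = pairDist x y :=
  rfl

lemma minPairDist_le_pairDist {F : Type*} [DecidableEq F] {n : ℕ} {C : Finset (Fin n → F)}
    {x y : Fin n → F} (hx : x ∈ C) (hy : y ∈ C) (hxy : x ≠ y) : minPairDist C ≤ pairDist x y :=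
  Nat.sInf_le ⟨x, hx, y, hy, hxy, rfl⟩

lemma minPairDist_pos {F : Type*} [DecidableEq F] {n : ℕ} {C : Finset (Fin n → F)}
    (hC : 2 ≤ C.card) : 0 < minPairDist C := by
  obtain ⟨x, hx, y, hy, hxy⟩ := Finset.one_lt_card.1 hC
  have hne : {d | ∃ x ∈ C, ∃ y ∈ C, x ≠ y ∧ pairDist x y = d}.Nonempty :=
    ⟨_, x, hx, y, hy, hxy, rfl⟩
  obtain ⟨a, -, b, -, hab, hd⟩ := Nat.sInf_mem hne
  rw [minPairDist, ← hd, ← hammingDist_pairRead]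
  exact hammingDist_pos.2 (pairRead_injective.ne hab)

theorem johnson_type_bound_pair_general {F : Type*} [Fintype F] [DecidableEq F]
    {q n d : ℕ} (hq : Fintype.card F = q) (hn : 0 < n)
    (C : Finset (Fin n → F)) (hC : 2 ≤ C.card) (hd : minPairDist C = d)
    (hδ : (q : ℝ) ^ 2 * ((d : ℝ) / n) ≤ (q : ℝ) ^ 2 - 1) :
    pairListDecodable C
      ((((q : ℝ) ^ 2 - 1) / (q : ℝ) ^ 2 *
          (1 - Real.sqrt (1 - (q : ℝ) ^ 2 * ((d : ℝ) / n) / ((q : ℝ) ^ 2 - 1)))) * n)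
      (2 * (q ^ 2 - 1) * n * d) := by
  intro y
  have : Nonempty (Fin n) := ⟨⟨0, hn⟩⟩
  have hQ : Fintype.card (F × F) = q ^ 2 := by rw [Fintype.card_prod, hq, sq]
  have hd₀ : 0 < d := hd ▸ minPairDist_pos hC
  refine (Finset.card_image_of_injective _ pairRead_injective).ge.trans ?_
  refine (card_le_of_hammingDist_le_johnsonRadius hd₀ (by simpa [hQ] using hδ) (pairRead y) _
    ?_ ?_).trans ?_
  · simp only [Finset.mem_image, Finset.mem_filter]
    rintro _ ⟨a, ⟨ha, -⟩, rfl⟩ _ ⟨b, ⟨hb, -⟩, rfl⟩ hab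
    rw [hammingDist_pairRead, ← hd]
    exact minPairDist_le_pairDist ha hb (fun h => hab (congrArg pairRead h))
  · simp only [Finset.mem_image, Finset.mem_filter]
    rintro _ ⟨a, ⟨-, ha⟩, rfl⟩
    simpa [hammingDist_pairRead, hQ, johnsonRadius] using ha
  · rw [hQ, Fintype.card_fin]
    calc 2 * (n * (q ^ 2 - 1)) = 2 * (q ^ 2 - 1) * n := by ring
      _ ≤ 2 * (q ^ 2 - 1) * n * d := Nat.le_mul_of_pos_right _ hd₀

/-- (Johnson-type bound for symbol-pair codes) Let `C ⊆ F_q^n` be a code with minimum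
pair distance `d`, let `δ = d/n`, and assume `q²δ ≤ q² − 1`. Then `C` is
`(τn, 2(q²−1)·n·d)_P`-list decodable, where
`τ = ((q²−1)/q²)·(1 − √(1 − q²δ/(q²−1)))`. -/
theorem johnson_type_bound_pair {F : Type*} [Field F] [Fintype F] [DecidableEq F]
    {q n d : ℕ} (hq : Fintype.card F = q) (hn : 0 < n)
    (C : Finset (Fin n → F)) (hC : 2 ≤ C.card) (hd : minPairDist C = d)
    (hδ : (q : ℝ) ^ 2 * ((d : ℝ) / n) ≤ (q : ℝ) ^ 2 - 1) :
    pairListDecodable C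
      ((((q : ℝ) ^ 2 - 1) / (q : ℝ) ^ 2 *
          (1 - Real.sqrt (1 - (q : ℝ) ^ 2 * ((d : ℝ) / n) / ((q : ℝ) ^ 2 - 1)))) * n)
      (2 * (q ^ 2 - 1) * n * d) :=
  johnson_type_bound_pair_general hq hn C hC hd hδ
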